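/- Let H22, Ĥ22, L21, U12, Ẑ, S̃, Ŝ be real matrices of conformable sizes and let ε, u, θ ≥ 0. Assume: (a) ‖Ĥ22 − H22‖_F ≤ ε·‖H22‖_F; (b) ‖L21·U12 − Ẑ‖_F ≤ θ·‖L21‖_F·‖U12‖_F; (c) ‖S̃ − (Ĥ22 − Ẑ)‖_F ≤ u·(‖Ĥ22‖_F + ‖Ẑ‖_F); (d) ‖Ŝ − S̃‖_F ≤ ε·‖S̃‖_F. Then the truncated computed Schur complement satisfies Ŝ = H22 − L21·U12 + ΔS with ‖ΔS‖_F ≤ ( (1+ε)·(ε + u(1+ε)) + ε )·‖H22‖_F + ( (1+ε)·(θ + u(1+θ)) + ε )·‖L21‖_F·‖U12‖_F. -/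
import Mathlib

/-- Frobenius norm of a real matrix: `‖M‖_F = (Σ_{i,j} m_{ij}²)^{1/2}`. -/
noncomputable def frob {α β : Type*} [Fintype α] [Fintype β] (A : Matrix α β ℝ) : ℝ :=
  Real.sqrt (∑ i, ∑ j, (A i j) ^ 2)

section aux

attribute [local instance] Matrix.frobeniusSeminormedAddCommGroup

lemma frob_eq_norm {α β : Type*} [Fintype α] [Fintype β] (A : Matrix α β ℝ) :
    frob A = ‖A‖ := by
  rw [Matrix.frobenius_norm_def, frob, Real.sqrt_eq_rpow]
  norm_num [Real.rpow_two, Real.norm_eq_abs, sq_abs]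

lemma frob_nonneg {α β : Type*} [Fintype α] [Fintype β] (A : Matrix α β ℝ) :
    0 ≤ frob A := by rw [frob_eq_norm]; exact norm_nonneg _

lemma frob_add {α β : Type*} [Fintype α] [Fintype β] (A B : Matrix α β ℝ) :
    frob (A + B) ≤ frob A + frob B := by
  simp only [frob_eq_norm]; exact norm_add_le _ _

lemma frob_sub_rev {α β : Type*} [Fintype α] [Fintype β] (A B : Matrix α β ℝ) :
    frob (A - B) = frob (B - A) := by
  simp only [frob_eq_norm]; exact norm_sub_rev _ _

lemma frob_mul {α β γ : Type*} [Fintype α] [Fintype β] [Fintype γ]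
    (A : Matrix α β ℝ) (B : Matrix β γ ℝ) :
    frob (A * B) ≤ frob A * frob B := by
  simp only [frob_eq_norm]; exact Matrix.frobenius_norm_mul A B

end aux

/-- Schur-complement error-propagation step of the HODLR LU analysis: `Ĥ22` is the
mixed-precision representation of `H22` (relative error `ε`), `Ẑ` is the computed
product `L21·U12` (error constant `θ`), `S̃` the Schur complement computed by a
floating-point subtraction at precision `u`, and `Ŝ` its rank-truncated approximation
(relative truncation error `ε`). Then `Ŝ = H22 − L21·U12 + ΔS` with
`‖ΔS‖_F ≤ ((1+ε)(ε + u(1+ε)) + ε)‖H22‖_F + ((1+ε)(θ + u(1+θ)) + ε)‖L21‖_F‖U12‖_F`. -/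
theorem schur_complement_error_propagation
    {α β : Type*} [Fintype α] [Fintype β]
    (H22 Hh22 Zh St Sh : Matrix α α ℝ) (L21 : Matrix α β ℝ) (U12 : Matrix β α ℝ)
    (ε u θ : ℝ) (hε : 0 ≤ ε) (hu : 0 ≤ u) (hθ : 0 ≤ θ)
    (ha : frob (Hh22 - H22) ≤ ε * frob H22)
    (hb : frob (L21 * U12 - Zh) ≤ θ * frob L21 * frob U12)
    (hc : frob (St - (Hh22 - Zh)) ≤ u * (frob Hh22 + frob Zh))
    (hd : frob (Sh - St) ≤ ε * frob St) :
    Sh = H22 - L21 * U12 + (Sh - (H22 - L21 * U12)) ∧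
    frob (Sh - (H22 - L21 * U12))
      ≤ ((1 + ε) * (ε + u * (1 + ε)) + ε) * frob H22
        + ((1 + ε) * (θ + u * (1 + θ)) + ε) * frob L21 * frob U12 := by
  refine ⟨by abel, ?_⟩
  have h0H : (0:ℝ) ≤ frob H22 := frob_nonneg _
  have h0L : (0:ℝ) ≤ frob L21 := frob_nonneg _
  have h0U : (0:ℝ) ≤ frob U12 := frob_nonneg _
  have h0St : (0:ℝ) ≤ frob St := frob_nonneg _
  have hmul := frob_mul L21 U12
  have h0LU : (0:ℝ) ≤ frob (L21 * U12) := frob_nonneg _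
  -- bound frob Hh22
  have hHh : frob Hh22 ≤ (1 + ε) * frob H22 := by
    have h := frob_add (Hh22 - H22) H22
    rw [sub_add_cancel] at h
    linarith
  -- bound frob Zh
  have hZ : frob Zh ≤ (1 + θ) * (frob L21 * frob U12) := by
    have h := frob_add (Zh - L21 * U12) (L21 * U12)
    rw [sub_add_cancel, frob_sub_rev] at h
    nlinarith
  -- bound frob St
  have hSt : frob St ≤ (1 + u) * (frob Hh22 + frob Zh) := by
    have h := frob_add (St - (Hh22 - Zh)) (Hh22 - Zh)
    rw [sub_add_cancel] at h
    have h2 : frob (Hh22 - Zh) ≤ frob Hh22 + frob Zh := by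
      have := frob_add Hh22 (-Zh)
      rw [show Hh22 + -Zh = Hh22 - Zh from rfl, show frob (-Zh) = frob Zh by
        rw [show -Zh = (0 : Matrix _ _ ℝ) - Zh by simp, frob_sub_rev]; simp] at this
      exact this
    linarith
  -- decompose the error
  have hdecomp : Sh - (H22 - L21 * U12)
      = (Sh - St) + (St - (Hh22 - Zh)) + (Hh22 - H22) + (L21 * U12 - Zh) := by
    abel
  have key : frob (Sh - (H22 - L21 * U12))
      ≤ frob (Sh - St) + frob (St - (Hh22 - Zh)) + frob (Hh22 - H22)
        + frob (L21 * U12 - Zh) := by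
    rw [hdecomp]
    calc frob ((Sh - St) + (St - (Hh22 - Zh)) + (Hh22 - H22) + (L21 * U12 - Zh))
        ≤ frob ((Sh - St) + (St - (Hh22 - Zh)) + (Hh22 - H22)) + frob (L21 * U12 - Zh) :=
          frob_add _ _
      _ ≤ frob ((Sh - St) + (St - (Hh22 - Zh))) + frob (Hh22 - H22)
            + frob (L21 * U12 - Zh) := by linarith [frob_add ((Sh - St) + (St - (Hh22 - Zh))) (Hh22 - H22)]
      _ ≤ _ := by linarith [frob_add (Sh - St) (St - (Hh22 - Zh))]
  have h0Hh : (0:ℝ) ≤ frob Hh22 := frob_nonneg _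
  have h0Zh : (0:ℝ) ≤ frob Zh := frob_nonneg _
  nlinarith [mul_nonneg h0L h0U, mul_nonneg hε hu, mul_nonneg hε (mul_nonneg h0L h0U),
    mul_nonneg hε h0H]
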